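/- arXiv:1808.04468 — 2 statements merged into one kernel-verified Lean document; each statement's English description precedes it below -/
import Mathlib

section
/- Let C be a real-valued random variable on a finite probability space with distribution p, and let α ∈ (0,1]. Then the conditional value-at-risk ρ_α[C] := inf_{ν ∈ ℝ} (ν + (1/α)·E[(C − ν)₊]) satisfies ρ_α[C] = sup { E_p[ζ·C] : ζ : Ω → [0, 1/α], E_p[ζ] = 1 }. -/
/-!
Weak duality is pointwise: for `0 ≤ ζ ≤ 1/α` with `E[ζ] = 1`,
`E[ζ C] = ν + E[ζ (C - ν)] ≤ ν + (1/α) E[(C - ν)₊]` for every `ν`.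
Equality holds at an `α`-quantile `ν` of `C`, i.e. `P(C > ν) ≤ α ≤ P(C ≥ ν)`, for the density
`ζ = (1/α) (θ 1{C ≥ ν} + (1 - θ) 1{C > ν})` with `θ ∈ [0, 1]` chosen so that `E[ζ] = 1`:
then `ζ (C - ν) = (1/α) (C - ν)₊` everywhere. So the infimum is attained and equals the supremum.
-/

open Finset

theorem ciInf_eq_csSup_of_forall_le_of_apply_mem {α ι : Type*} [ConditionallyCompleteLattice α]
    {f : ι → α} {S : Set α} (hle : ∀ x ∈ S, ∀ i, x ≤ f i) (i₀ : ι) (hi₀ : f i₀ ∈ S) :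
    ⨅ i, f i = sSup S :=
  have : Nonempty ι := ⟨i₀⟩
  le_antisymm ((ciInf_le ⟨f i₀, fun _ ⟨i, hi⟩ => hi ▸ hle _ hi₀ i⟩ i₀).trans
      (le_csSup ⟨f i₀, fun x hx => hle x hx i₀⟩ hi₀))
    (csSup_le ⟨_, hi₀⟩ fun x hx => le_ciInf (hle x hx))

theorem mul_le_mul_max_zero {z b x : ℝ} (hz0 : 0 ≤ z) (hzb : z ≤ b) : z * x ≤ b * max x 0 := by
  rcases le_total 0 x with hx | hx
  · rw [max_eq_left hx]
    exact mul_le_mul_of_nonneg_right hzb hx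
  · rw [max_eq_right hx]
    nlinarith

section

variable {Ω : Type*} [Fintype Ω]

noncomputable def cvarObjective (p C : Ω → ℝ) (α ν : ℝ) : ℝ :=
  ν + (1 / α) * ∑ ω, p ω * max (C ω - ν) 0

def riskEnvelope (p : Ω → ℝ) (α : ℝ) : Set (Ω → ℝ) :=
  {ζ | (∀ ω, 0 ≤ ζ ω ∧ ζ ω ≤ 1 / α) ∧ ∑ ω, ζ ω * p ω = 1}

theorem exists_sum_lt_le_and_le_sum_le [Nonempty Ω] (p C : Ω → ℝ) {α : ℝ} (hα0 : 0 ≤ α)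
    (hα : α ≤ ∑ ω, p ω) : ∃ ν, ∑ ω with ν < C ω, p ω ≤ α ∧ α ≤ ∑ ω with ν ≤ C ω, p ω := by
  obtain ⟨ωmin, -, hmin⟩ := univ.exists_min_image C univ_nonempty
  -- `ν` is the largest value `v` of `C` with `α ≤ P(C ≥ v)`.
  obtain ⟨ω₀, hω₀, hmax⟩ :=
    (univ.filter fun ω => α ≤ ∑ ω' with C ω ≤ C ω', p ω').exists_max_image C ⟨ωmin,
      mem_filter.2 ⟨mem_univ _, by rwa [filter_true_of_mem fun ω _ => hmin ω (mem_univ ω)]⟩⟩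
  refine ⟨C ω₀, ?_, (mem_filter.1 hω₀).2⟩
  by_contra! hlt
  have hne : (univ.filter fun ω => C ω₀ < C ω).Nonempty := by
    by_contra hempty
    rw [not_nonempty_iff_eq_empty.1 hempty, sum_empty] at hlt
    linarith
  obtain ⟨ω₁, hω₁, hmin₁⟩ := exists_min_image _ C hne
  have hω₁gt : C ω₀ < C ω₁ := (mem_filter.1 hω₁).2
  have hsame : ∑ ω with C ω₁ ≤ C ω, p ω = ∑ ω with C ω₀ < C ω, p ω := by
    refine sum_congr (filter_congr fun ω _ => ⟨hω₁gt.trans_le, fun h => ?_⟩) fun _ _ => rfl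
    exact hmin₁ ω (mem_filter.2 ⟨mem_univ _, h⟩)
  have := hmax ω₁ (mem_filter.2 ⟨mem_univ _, by rw [hsame]; exact hlt.le⟩)
  linarith

theorem exists_weight_mul_sub_eq_max (p C : Ω → ℝ) {α ν : ℝ}
    (hlt : ∑ ω with ν < C ω, p ω ≤ α) (hle : α ≤ ∑ ω with ν ≤ C ω, p ω) :
    ∃ w : Ω → ℝ, (∀ ω, 0 ≤ w ω ∧ w ω ≤ 1) ∧ ∑ ω, w ω * p ω = α ∧
      ∀ ω, w ω * (C ω - ν) = max (C ω - ν) 0 := by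
  set a := ∑ ω with ν < C ω, p ω
  set b := ∑ ω with ν ≤ C ω, p ω
  set θ := (α - a) / (b - a)
  have hθ0 : 0 ≤ θ := div_nonneg (by linarith) (by linarith)
  have hθ1 : θ ≤ 1 := div_le_one_of_le₀ (by linarith) (by linarith)
  have hθ : θ * b + (1 - θ) * a = α := by
    rcases eq_or_ne (b - a) 0 with hab | hab
    · have hαa : α = a := by linarith
      linear_combination θ * hab - hαa
    · linear_combination div_mul_cancel₀ (α - a) hab
  refine ⟨fun ω => θ * (if ν ≤ C ω then 1 else 0) + (1 - θ) * (if ν < C ω then 1 else 0),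
    fun ω => ?_, ?_, fun ω => ?_⟩
  · dsimp only
    split_ifs <;> constructor <;> linarith
  · simp only [add_mul, mul_assoc, boole_mul, sum_add_distrib, ← mul_sum, ← sum_filter, a, b, hθ]
  · rcases lt_trichotomy ν (C ω) with h | rfl | h
    · simp [h, h.le]
    · simp
    · simp [h.not_ge, h.not_gt, max_eq_right (sub_nonpos.2 h.le)]

theorem sum_mul_mul_eq_add_sum_mul_mul_sub (p ζ C : Ω → ℝ) (hζ : ∑ ω, ζ ω * p ω = 1) (ν : ℝ) :
    ∑ ω, p ω * (ζ ω * C ω) = ν + ∑ ω, p ω * (ζ ω * (C ω - ν)) := by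
  have hsplit : ∀ ω, p ω * (ζ ω * (C ω - ν)) = p ω * (ζ ω * C ω) - ν * (ζ ω * p ω) :=
    fun ω => by ring
  rw [sum_congr rfl fun ω _ => hsplit ω, sum_sub_distrib, ← mul_sum, hζ]
  ring

theorem sum_mul_mul_le_cvarObjective {p ζ : Ω → ℝ} {α : ℝ} (hp0 : ∀ ω, 0 ≤ p ω)
    (hζ : ζ ∈ riskEnvelope p α) (C : Ω → ℝ) (ν : ℝ) :
    ∑ ω, p ω * (ζ ω * C ω) ≤ cvarObjective p C α ν := by
  rw [sum_mul_mul_eq_add_sum_mul_mul_sub p ζ C hζ.2 ν, cvarObjective, mul_sum]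
  refine add_le_add_right (sum_le_sum fun ω _ => ?_) ν
  rw [mul_left_comm (1 / α)]
  exact mul_le_mul_of_nonneg_left (mul_le_mul_max_zero (hζ.1 ω).1 (hζ.1 ω).2) (hp0 ω)

theorem exists_mem_riskEnvelope_sum_mul_mul_eq_cvarObjective [Nonempty Ω] (p C : Ω → ℝ) {α : ℝ}
    (hα0 : 0 < α) (hα : α ≤ ∑ ω, p ω) :
    ∃ ν, ∃ ζ ∈ riskEnvelope p α, ∑ ω, p ω * (ζ ω * C ω) = cvarObjective p C α ν := by
  obtain ⟨ν, hlt, hle⟩ := exists_sum_lt_le_and_le_sum_le p C hα0.le hα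
  obtain ⟨w, hw01, hwα, hwC⟩ := exists_weight_mul_sub_eq_max p C hlt hle
  have hζ : (fun ω => w ω / α) ∈ riskEnvelope p α := by
    refine ⟨fun ω => ⟨div_nonneg (hw01 ω).1 hα0.le,
      div_le_div_of_nonneg_right (hw01 ω).2 hα0.le⟩, ?_⟩
    simp only [div_mul_eq_mul_div, ← sum_div, hwα, div_self hα0.ne']
  refine ⟨ν, _, hζ, ?_⟩
  rw [sum_mul_mul_eq_add_sum_mul_mul_sub p _ C hζ.2 ν, cvarObjective, mul_sum]
  congr 1
  refine sum_congr rfl fun ω _ => ?_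
  rw [div_mul_eq_mul_div, hwC]
  ring

end

/-- CVaR dual representation: the infimum (Rockafellar–Uryasev) form of CVaR
equals the supremum over the risk envelope. -/
theorem cvar_dual_representation
    {Ω : Type*} [Fintype Ω] (p : Ω → ℝ) (C : Ω → ℝ) (α : ℝ)
    (hα : α ∈ Set.Ioc (0:ℝ) 1)
    (hp0 : ∀ ω, 0 ≤ p ω) (hp1 : ∑ ω, p ω = 1) :
    (⨅ ν : ℝ, ν + (1/α) * ∑ ω, p ω * max (C ω - ν) 0) =
      sSup {x : ℝ | ∃ ζ : Ω → ℝ, (∀ ω, 0 ≤ ζ ω ∧ ζ ω ≤ 1/α) ∧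
        (∑ ω, ζ ω * p ω = 1) ∧ x = ∑ ω, p ω * (ζ ω * C ω)} := by
  obtain ⟨hα0, hα1⟩ := hα
  have : Nonempty Ω := by
    by_contra! hempty
    simp at hp1
  obtain ⟨ν, ζ, hζ, hζν⟩ :=
    exists_mem_riskEnvelope_sum_mul_mul_eq_cvarObjective p C hα0 (hp1 ▸ hα1)
  refine ciInf_eq_csSup_of_forall_le_of_apply_mem (f := cvarObjective p C α) ?_ ν
    ⟨ζ, hζ.1, hζ.2, hζν.symm⟩
  rintro x ⟨ζ, hbound, hsum, rfl⟩ ν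
  exact sum_mul_mul_le_cvarObjective hp0 ⟨hbound, hsum⟩ C ν
end

section
/- Let d and d' be finitely supported nonnegative measures on a finite set X with equal total mass m > 0. Then sup_{f : X → (0,1)} Σ_{x ∈ X} [d(x)·log f(x) + d'(x)·log(1 − f(x))] = −m·log 4 + 2m·D_JS(d/m, d'/m), where D_JS(p,q) = (1/2)·KL(p ‖ (p+q)/2) + (1/2)·KL(q ‖ (p+q)/2) is the Jensen–Shannon divergence of the normalized probability measures. -/
/-!
Pointwise, `t ↦ a log t + b log (1 - t)` on `(0, 1)` is maximised at `t = a / (a + b)`, which follows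
from `log y ≤ y - 1`. When `a` or `b` vanishes the maximiser leaves `(0, 1)`, so the supremum is
approached by the discriminators `(a + δ) / (a + b + 2δ)` as `δ → 0⁺` rather than attained.
Rewriting the Jensen–Shannon divergence in terms of `a / (a + b)` is then bookkeeping.
-/

open Real Filter Topology

lemma mul_log_le_mul_log_div_add {a s t : ℝ} (ha : 0 ≤ a) (hs : 0 < s) (ht : 0 < t) :
    a * log t ≤ a * log (a / s) + (s * t - a) := by
  rcases ha.eq_or_lt with rfl | ha
  · simpa using (mul_pos hs ht).le
  have key : log (s * t / a) ≤ s * t / a - 1 := log_le_sub_one_of_pos (by positivity)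
  rw [log_div (by positivity) ha.ne', log_mul hs.ne' ht.ne'] at key
  rw [log_div ha.ne' hs.ne']
  have hscale : a * (s * t / a - 1) = s * t - a := by field_simp
  linarith [mul_le_mul_of_nonneg_left key ha.le]

lemma mul_log_add_mul_log_one_sub_le {a b t : ℝ} (ha : 0 ≤ a) (hb : 0 ≤ b)
    (ht₀ : 0 < t) (ht₁ : t < 1) :
    a * log t + b * log (1 - t) ≤ a * log (a / (a + b)) + b * log (b / (a + b)) := by
  rcases (add_nonneg ha hb).eq_or_lt with hs | hs
  · obtain ⟨rfl, rfl⟩ : a = 0 ∧ b = 0 := ⟨by linarith, by linarith⟩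
    simp
  have h₁ := mul_log_le_mul_log_div_add ha hs ht₀
  have h₂ := mul_log_le_mul_log_div_add hb hs (sub_pos.2 ht₁)
  linarith

lemma add_div_add_add_two_mul_mem_Ioo {a b δ : ℝ} (ha : 0 ≤ a) (hb : 0 ≤ b) (hδ : 0 < δ) :
    (a + δ) / (a + b + 2 * δ) ∈ Set.Ioo 0 1 :=
  ⟨by positivity, (div_lt_one (by positivity)).2 (by linarith)⟩

lemma tendsto_mul_log_add_div_add_add_two_mul {a b : ℝ} (ha : 0 ≤ a) (hb : 0 ≤ b) :
    Tendsto (fun δ => a * log ((a + δ) / (a + b + 2 * δ))) (𝓝 0) (𝓝 (a * log (a / (a + b)))) := by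
  rcases ha.eq_or_lt with rfl | ha
  · simp
  have hcont : ContinuousAt (fun δ => a * log ((a + δ) / (a + b + 2 * δ))) 0 := by
    refine continuousAt_const.mul (ContinuousAt.log ?_ (by simpa using ⟨ha.ne', by positivity⟩))
    exact (continuousAt_const.add continuousAt_id).div (by fun_prop) (by simp; positivity)
  simpa using hcont.tendsto

lemma tendsto_mul_log_add_mul_log_one_sub {a b : ℝ} (ha : 0 ≤ a) (hb : 0 ≤ b) :
    Tendsto (fun δ => a * log ((a + δ) / (a + b + 2 * δ)) +
        b * log (1 - (a + δ) / (a + b + 2 * δ))) (𝓝[>] 0)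
      (𝓝 (a * log (a / (a + b)) + b * log (b / (a + b)))) := by
  have hb_lim := tendsto_mul_log_add_div_add_add_two_mul hb ha
  rw [add_comm b a] at hb_lim
  refine ((tendsto_mul_log_add_div_add_add_two_mul ha hb).add hb_lim).mono_left
    nhdsWithin_le_nhds |>.congr' ?_
  filter_upwards [self_mem_nhdsWithin] with δ (hδ : 0 < δ)
  rw [one_sub_div (by positivity)]
  ring_nf

theorem isLUB_sum_mul_log_add_mul_log_one_sub {X : Type*} [Fintype X] {d d' : X → ℝ}
    (hd : ∀ x, 0 ≤ d x) (hd' : ∀ x, 0 ≤ d' x) :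
    IsLUB {S : ℝ | ∃ f : X → ℝ, (∀ x, f x ∈ Set.Ioo (0:ℝ) 1) ∧
        S = ∑ x, (d x * log (f x) + d' x * log (1 - f x))}
      (∑ x, (d x * log (d x / (d x + d' x)) + d' x * log (d' x / (d x + d' x)))) := by
  refine ⟨?_, fun B hB => ?_⟩
  · rintro S ⟨f, hf, rfl⟩
    exact Finset.sum_le_sum fun x _ =>
      mul_log_add_mul_log_one_sub_le (hd x) (hd' x) (hf x).1 (hf x).2
  · refine le_of_tendsto
      (tendsto_finsetSum _ fun x _ => tendsto_mul_log_add_mul_log_one_sub (hd x) (hd' x)) ?_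
    filter_upwards [self_mem_nhdsWithin] with δ (hδ : 0 < δ)
    exact hB ⟨_, fun x => add_div_add_add_two_mul_mem_Ioo (hd x) (hd' x) hδ, rfl⟩

lemma div_mul_log_div_midpoint {a b m : ℝ} (hm : m ≠ 0) (ha : 0 ≤ a) (hb : 0 ≤ b) :
    a / m * log (a / m / ((a / m + b / m) / 2)) = (a * log 2 + a * log (a / (a + b))) / m := by
  rcases ha.eq_or_lt with rfl | ha
  · simp
  have hratio : a / m / ((a / m + b / m) / 2) = 2 * (a / (a + b)) := by
    rw [← add_div]
    field_simp
  rw [hratio, log_mul two_ne_zero (by positivity)]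
  ring

/-- Optimal discriminator identity: for measures d, d' of equal total mass m > 0,
the supremum of the GAN log-loss objective equals −m·log 4 plus 2m times the
Jensen–Shannon divergence of the normalized measures. -/
theorem gan_objective_eq_js
    {X : Type*} [Fintype X] (d d' : X → ℝ) (m : ℝ)
    (hd : ∀ x, 0 ≤ d x) (hd' : ∀ x, 0 ≤ d' x)
    (hm : 0 < m) (hmd : ∑ x, d x = m) (hmd' : ∑ x, d' x = m) :
    sSup {S : ℝ | ∃ f : X → ℝ, (∀ x, f x ∈ Set.Ioo (0:ℝ) 1) ∧
        S = ∑ x, (d x * Real.log (f x) + d' x * Real.log (1 - f x))} =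
      -m * Real.log 4 +
        2 * m * ((1/2) * ∑ x, (d x / m) * Real.log ((d x / m) / ((d x / m + d' x / m) / 2))
               + (1/2) * ∑ x, (d' x / m) * Real.log ((d' x / m) / ((d x / m + d' x / m) / 2))) := by
  rw [(isLUB_sum_mul_log_add_mul_log_one_sub hd hd').csSup_eq
    ⟨_, fun _ => 1 / 2, fun _ => ⟨by norm_num, by norm_num⟩, rfl⟩]
  have hkl : ∑ x, d x / m * log (d x / m / ((d x / m + d' x / m) / 2)) =
      (m * log 2 + ∑ x, d x * log (d x / (d x + d' x))) / m := by
    simp_rw [div_mul_log_div_midpoint hm.ne' (hd _) (hd' _)]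
    rw [← Finset.sum_div, Finset.sum_add_distrib, ← Finset.sum_mul, hmd]
  have hkl' : ∑ x, d' x / m * log (d' x / m / ((d x / m + d' x / m) / 2)) =
      (m * log 2 + ∑ x, d' x * log (d' x / (d x + d' x))) / m := by
    simp_rw [add_comm (d _ / m), add_comm (d _), div_mul_log_div_midpoint hm.ne' (hd' _) (hd _)]
    rw [← Finset.sum_div, Finset.sum_add_distrib, ← Finset.sum_mul, hmd']
  have hlog4 : log 4 = 2 * log 2 := by
    rw [show (4 : ℝ) = 2 ^ 2 by norm_num, log_pow, Nat.cast_ofNat]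
  rw [hkl, hkl', hlog4, Finset.sum_add_distrib]
  field_simp
  ring
end
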